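/- Let 𝕃 = (x_1^{d_1},...,x_h^{d_h}) ⊕ V be a d-LPP ideal in S = k[x_1,...,x_n] written as in the standard decomposition, and let D, D+1 be two consecutive degrees. Then the ideal generated by (x_1^{d_1},...,x_h^{d_h}) together with the vector space V_D ⊕ V_{D+1} is again a d-LPP ideal with the same graded components as 𝕃 in all degrees ≥ D+1 (after including the ideal generated by V_D, V_{D+1}) and equal to (x_1^{d_1},...,x_h^{d_h}) in degrees below D. -/

import Mathlib

open MvPolynomial

noncomputable section EGHDefs

/-- Total degree of an exponent vector. -/
def mdeg {n : ℕ} (a : Fin n →₀ ℕ) : ℕ := a.sum fun _ e => e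

/-- `monLT a b` : the monomial `x^a` is strictly smaller than `x^b` in the
lexicographic order with `x_1 > x_2 > ... > x_n`. -/
def monLT {n : ℕ} (a b : Fin n →₀ ℕ) : Prop :=
  ∃ i : Fin n, (∀ j : Fin n, j < i → a j = b j) ∧ a i < b i

/-- A lex-segment of exponent vectors in degree `j`. -/
def LexSeg {n : ℕ} (j : ℕ) (V : Set (Fin n →₀ ℕ)) : Prop :=
  (∀ a ∈ V, mdeg a = j) ∧ ∀ a ∈ V, ∀ b : Fin n →₀ ℕ, mdeg b = j → monLT a b → b ∈ V

variable (k : Type) [Field k] {n : ℕ}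

/-- Hilbert function of a (homogeneous) ideal `I`: the `k`-dimension of its degree `j` part. -/
def HF (I : Ideal (MvPolynomial (Fin n) k)) (j : ℕ) : ℕ :=
  Module.finrank k
    ↥(Submodule.restrictScalars k (I : Submodule (MvPolynomial (Fin n) k) (MvPolynomial (Fin n) k))
      ⊓ homogeneousSubmodule (Fin n) k j)

/-- Hilbert function of the quotient `S/I` in degree `j`. -/
def HFq (I : Ideal (MvPolynomial (Fin n) k)) (j : ℕ) : ℕ :=
  Module.finrank k
    ↥((homogeneousSubmodule (Fin n) k j).map (Ideal.Quotient.mkₐ k I).toLinearMap)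

/-- `I` is a homogeneous ideal. -/
def IsHomog (I : Ideal (MvPolynomial (Fin n) k)) : Prop :=
  ∀ f ∈ I, ∀ j : ℕ, homogeneousComponent j f ∈ I

/-- `f 0, f 1, ..., f (h-1)` is a regular sequence. -/
def IsRegSeq {h : ℕ} (f : Fin h → MvPolynomial (Fin n) k) : Prop :=
  Ideal.span (Set.range f) ≠ ⊤ ∧
  ∀ i : Fin h, ∀ g : MvPolynomial (Fin n) k,
    g * f i ∈ Ideal.span (f '' {j | j < i}) → g ∈ Ideal.span (f '' {j | j < i})

/-- The monomial complete intersection `(x_1^{d_1}, ..., x_h^{d_h})`. -/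
def powIdeal {h : ℕ} (hh : h ≤ n) (d : Fin h → ℕ) : Ideal (MvPolynomial (Fin n) k) :=
  Ideal.span (Set.range fun i : Fin h => (X (Fin.castLE hh i) : MvPolynomial (Fin n) k) ^ d i)

/-- `L` is a lexicographic (monomial) ideal. -/
def IsLexIdeal (L : Ideal (MvPolynomial (Fin n) k)) : Prop :=
  (∀ f ∈ L, ∀ a ∈ f.support, (monomial a (1 : k)) ∈ L) ∧
  ∀ a b : Fin n →₀ ℕ, mdeg a = mdeg b → monLT a b →
    (monomial a (1 : k)) ∈ L → monomial b (1 : k) ∈ L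

/-- `𝕃` is a `d`-LPP (lex-plus-power) ideal. -/
def IsLPP {h : ℕ} (hh : h ≤ n) (d : Fin h → ℕ) (𝕃 : Ideal (MvPolynomial (Fin n) k)) : Prop :=
  ∃ L : Ideal (MvPolynomial (Fin n) k), IsLexIdeal k L ∧ 𝕃 = powIdeal k hh d ⊔ L

/-- `I` contains a regular sequence of degrees `d`. -/
def ContainsRS {h : ℕ} (d : Fin h → ℕ) (I : Ideal (MvPolynomial (Fin n) k)) : Prop :=
  ∃ f : Fin h → MvPolynomial (Fin n) k,
    IsRegSeq k f ∧ (∀ i, (f i).IsHomogeneous (d i)) ∧ ∀ i, f i ∈ I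

/-- `I` satisfies the Eisenbud-Green-Harris conjecture for the degree sequence `d`:
there is a `d`-LPP ideal with the same Hilbert function as `I`. -/
def EGH {h : ℕ} (hh : h ≤ n) (d : Fin h → ℕ) (I : Ideal (MvPolynomial (Fin n) k)) : Prop :=
  ∃ 𝕃 : Ideal (MvPolynomial (Fin n) k), IsLPP k hh d 𝕃 ∧ ∀ j : ℕ, HF k 𝕃 j = HF k I j

end EGHDefs

/-! Write `𝕃 = P + L` with `L` lex. Then `𝕃₅ = P + W`, where `W` is generated by the monomials
of `L` of degrees `D` and `D + 1`; all these ideals are monomial, so their graded pieces are easy to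
compare. The point is that `W` is again lex. For `x^a ∈ W` let `m = min (deg a) (D + 1)`. The
lex-largest divisor of `x^a` of degree `m`, obtained by filling the variables greedily in order,
lies in `L`: if `x^s ∣ x^a` is a generator of `W`, the lex-largest divisor of `x^a` of degree
`deg s` is lex-above `x^s`, hence in `L`, and it divides the one of degree `m`. The greedy
truncation is monotone for the lex order, so for `x^b` lex-above `x^a` of the same degree, the
truncation of `x^b` lies in `L`, hence in `W`, and divides `x^b`. -/

section Exponents

variable {n : ℕ}

lemma mdeg_eq_degree (a : Fin n →₀ ℕ) : mdeg a = a.degree := rfl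

lemma monLT_iff_toLex_lt {a b : Fin n →₀ ℕ} : monLT a b ↔ toLex a < toLex b := Iff.rfl

def prefixDeg (a : Fin n →₀ ℕ) (i : ℕ) : ℕ :=
  ∑ j ∈ Finset.univ.filter (fun j : Fin n => (j : ℕ) < i), a j

variable (a : Fin n →₀ ℕ)

lemma prefixDeg_zero : prefixDeg a 0 = 0 := by simp [prefixDeg]

lemma prefixDeg_succ {i : ℕ} (hi : i < n) : prefixDeg a (i + 1) = prefixDeg a i + a ⟨i, hi⟩ := by
  have : Finset.univ.filter (fun j : Fin n => (j : ℕ) < i + 1) =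
      insert ⟨i, hi⟩ (Finset.univ.filter fun j : Fin n => (j : ℕ) < i) := by
    ext j
    simp only [Finset.mem_filter, Finset.mem_univ, true_and, Finset.mem_insert, Fin.ext_iff]
    omega
  rw [prefixDeg, this, Finset.sum_insert (by simp), add_comm]
  rfl

lemma prefixDeg_of_le {i : ℕ} (hi : n ≤ i) : prefixDeg a i = mdeg a := by
  rw [prefixDeg, mdeg_eq_degree, Finsupp.degree_eq_sum]
  exact Finset.sum_congr (Finset.filter_true_of_mem fun j _ => j.isLt.trans_le hi) fun _ _ => rfl

lemma prefixDeg_mono : Monotone (prefixDeg a) := fun _ _ hij =>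
  Finset.sum_le_sum_of_subset fun j => by
    simp only [Finset.mem_filter, Finset.mem_univ, true_and]
    omega

lemma prefixDeg_le_mdeg (i : ℕ) : prefixDeg a i ≤ mdeg a :=
  (prefixDeg_mono a (le_max_left i n)).trans_eq (prefixDeg_of_le a (le_max_right i n))

lemma prefixDeg_congr {a b : Fin n →₀ ℕ} {i : ℕ} (h : ∀ j : Fin n, (j : ℕ) < i → a j = b j) :
    prefixDeg a i = prefixDeg b i :=
  Finset.sum_congr rfl fun j hj => h j (Finset.mem_filter.mp hj).2

lemma apply_eq_zero_of_prefixDeg_eq_mdeg {i j : Fin n} (h : prefixDeg a (i + 1) = mdeg a)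
    (hij : i < j) : a j = 0 := by
  have hsucc := prefixDeg_succ a j.isLt
  have hle := prefixDeg_le_mdeg a (j + 1)
  have hmono := prefixDeg_mono a (show (i : ℕ) + 1 ≤ j from hij)
  simp only [Fin.eta] at hsucc
  omega

/-- For `m ≤ mdeg a`, the lex-largest exponent `s ≤ a` of degree `m`. -/
noncomputable def lexTrunc (m : ℕ) : Fin n →₀ ℕ :=
  Finsupp.equivFunOnFinite.symm fun i => min (a i) (m - prefixDeg a i)

lemma lexTrunc_apply (m : ℕ) (i : Fin n) : lexTrunc a m i = min (a i) (m - prefixDeg a i) := rfl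

lemma lexTrunc_le (m : ℕ) : lexTrunc a m ≤ a := fun _ => min_le_left _ _

lemma lexTrunc_mono : Monotone (lexTrunc a) := fun _ _ hm _ => by
  simp only [lexTrunc_apply]
  omega

lemma prefixDeg_lexTrunc (m i : ℕ) : prefixDeg (lexTrunc a m) i = min (prefixDeg a i) m := by
  induction i with
  | zero => simp [prefixDeg_zero]
  | succ i ih =>
    rcases lt_or_ge i n with hi | hi
    · rw [prefixDeg_succ _ hi, prefixDeg_succ a hi, ih, lexTrunc_apply]
      dsimp only
      omega
    · rw [prefixDeg_of_le _ (by omega), prefixDeg_of_le a (by omega), ← prefixDeg_of_le _ hi,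
        ← prefixDeg_of_le a hi, ih]

lemma mdeg_lexTrunc {m : ℕ} (hm : m ≤ mdeg a) : mdeg (lexTrunc a m) = m := by
  rw [← prefixDeg_of_le _ le_rfl, prefixDeg_lexTrunc, prefixDeg_of_le a le_rfl]
  omega

lemma toLex_le_lexTrunc {s : Fin n →₀ ℕ} (hsa : s ≤ a) :
    toLex s ≤ toLex (lexTrunc a (mdeg s)) := by
  by_contra! hlt
  obtain ⟨i, hagree, hi⟩ := Finsupp.Lex.lt_iff.mp hlt
  have hti := lexTrunc_apply a (mdeg s) i
  have hsi := hsa i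
  have htrunc := prefixDeg_lexTrunc a (mdeg s) i
  have hs := prefixDeg_le_mdeg s (i + 1)
  have hsucc := prefixDeg_succ s i.isLt
  have hprefix := prefixDeg_congr fun j (hj : (j : ℕ) < i) => hagree j hj
  simp only [Fin.eta, ofLex_toLex] at *
  omega

lemma lexTrunc_toLex_mono {a b : Fin n →₀ ℕ} {m : ℕ} (hab : monLT a b) (ha : m ≤ mdeg a)
    (hb : m ≤ mdeg b) : toLex (lexTrunc a m) ≤ toLex (lexTrunc b m) := by
  obtain ⟨i, hagree, hlt⟩ := hab
  have hbelow : ∀ j < i, lexTrunc a m j = lexTrunc b m j := fun j hj => by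
    rw [lexTrunc_apply, lexTrunc_apply, hagree j hj,
      prefixDeg_congr fun l (hl : (l : ℕ) < j) => hagree l (hl.trans hj)]
  have hprefix : prefixDeg a i = prefixDeg b i := prefixDeg_congr fun j hj => hagree j hj
  have hta := lexTrunc_apply a m i
  have htb := lexTrunc_apply b m i
  rcases lt_or_ge (lexTrunc a m i) (lexTrunc b m i) with hi | hi
  · exact (Finsupp.Lex.lt_iff.mpr ⟨i, hbelow, hi⟩).le
  -- otherwise both truncations use up the whole degree `m` at the variable `i`
  have heq : lexTrunc a m i = lexTrunc b m i := by omega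
  have hfull : ∀ c : Fin n →₀ ℕ, prefixDeg c i = prefixDeg a i →
      lexTrunc c m i = m - prefixDeg a i → prefixDeg (lexTrunc c m) (i + 1) = m := by
    intro c hc hci
    have := prefixDeg_succ (lexTrunc c m) i.isLt
    simp only [Fin.eta] at this
    rw [this, prefixDeg_lexTrunc, hc, hci]
    omega
  have hzero : ∀ c : Fin n →₀ ℕ, m ≤ mdeg c → prefixDeg (lexTrunc c m) (i + 1) = m →
      ∀ j, i < j → lexTrunc c m j = 0 := fun c hc h j hj =>
    apply_eq_zero_of_prefixDeg_eq_mdeg _ (h.trans (mdeg_lexTrunc c hc).symm) hj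
  have hA := hzero a ha (hfull a rfl (by omega))
  have hB := hzero b hb (hfull b hprefix.symm (by omega))
  refine le_of_eq (congrArg toLex (Finsupp.ext fun j => ?_))
  rcases lt_trichotomy j i with hj | rfl | hj
  · exact hbelow j hj
  · exact heq
  · rw [hA j hj, hB j hj]

end Exponents

section MonomialIdeals

variable {σ R : Type*} [CommSemiring R]

def IsMonomialIdeal (I : Ideal (MvPolynomial σ R)) : Prop :=
  ∀ f ∈ I, ∀ a ∈ f.support, monomial a (1 : R) ∈ I

lemma monomial_mem_of_le {I : Ideal (MvPolynomial σ R)} {s a : σ →₀ ℕ}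
    (hs : monomial s (1 : R) ∈ I) (hsa : s ≤ a) : monomial a (1 : R) ∈ I :=
  I.mem_of_dvd (monomial_dvd_monomial.mpr ⟨Or.inr hsa, one_dvd _⟩) hs

lemma monomial_mem_span_monomial_image_iff [Nontrivial R] {A : Set (σ →₀ ℕ)} {a : σ →₀ ℕ} :
    monomial a (1 : R) ∈ Ideal.span ((fun s => monomial s (1 : R)) '' A) ↔ ∃ s ∈ A, s ≤ a := by
  classical
  rw [mem_ideal_span_monomial_image, support_monomial, if_neg one_ne_zero]
  simp

lemma isMonomialIdeal_span_monomial_image (A : Set (σ →₀ ℕ)) :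
    IsMonomialIdeal (Ideal.span ((fun s => monomial s (1 : R)) '' A)) := fun _ hf a ha => by
  obtain ⟨s, hs, hsa⟩ := mem_ideal_span_monomial_image.mp hf a ha
  exact monomial_mem_of_le (Ideal.subset_span ⟨s, hs, rfl⟩) hsa

lemma IsMonomialIdeal.monomial_mem_or_of_mem_sup [Nontrivial R] {I J : Ideal (MvPolynomial σ R)}
    (hI : IsMonomialIdeal I) (hJ : IsMonomialIdeal J) {a : σ →₀ ℕ}
    (h : monomial a (1 : R) ∈ I ⊔ J) : monomial a (1 : R) ∈ I ∨ monomial a (1 : R) ∈ J := by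
  obtain ⟨p, hp, q, hq, hpq⟩ := Submodule.mem_sup.mp h
  have hcoeff : coeff a p + coeff a q = 1 := by
    classical
    rw [← coeff_add, hpq, coeff_monomial, if_pos rfl]
  by_cases hpa : coeff a p = 0
  · refine Or.inr (hJ q hq a (mem_support_iff.mpr ?_))
    rw [hpa, zero_add] at hcoeff
    exact hcoeff ▸ one_ne_zero
  · exact Or.inl (hI p hp a (mem_support_iff.mpr hpa))

lemma homogeneousComponent_mem_of_forall_monomial_mem {I : Ideal (MvPolynomial σ R)}
    {p : MvPolynomial σ R} {j : ℕ}
    (h : ∀ c ∈ p.support, c.degree = j → monomial c (1 : R) ∈ I) :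
    homogeneousComponent j p ∈ I := by
  rw [homogeneousComponent_apply]
  refine Ideal.sum_mem _ fun c hc => ?_
  obtain ⟨hcp, hcj⟩ := Finset.mem_filter.mp hc
  rw [← mul_one (coeff c p), ← C_mul_monomial]
  exact I.mul_mem_left _ (h c hcp hcj)

lemma IsMonomialIdeal.homogeneousComponent_mem {I : Ideal (MvPolynomial σ R)}
    (hI : IsMonomialIdeal I) {j : ℕ} {p : MvPolynomial σ R} (hp : p ∈ I) :
    homogeneousComponent j p ∈ I :=
  homogeneousComponent_mem_of_forall_monomial_mem fun c hc _ => hI p hp c hc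

lemma homogeneousComponent_eq_zero_of_mem_span_monomial_image {A : Set (σ →₀ ℕ)}
    {p : MvPolynomial σ R} (hp : p ∈ Ideal.span ((fun s => monomial s (1 : R)) '' A)) {j : ℕ}
    (hj : ∀ s ∈ A, j < s.degree) : homogeneousComponent j p = 0 :=
  homogeneousComponent_eq_zero' _ _ fun c hc => by
    obtain ⟨s, hs, hsc⟩ := mem_ideal_span_monomial_image.mp hp c hc
    exact ((hj s hs).trans_le (Finsupp.degree_mono hsc)).ne'

lemma mem_sup_of_isHomogeneous {I J I' J' : Ideal (MvPolynomial σ R)} {f : MvPolynomial σ R}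
    {j : ℕ} (hf : f.IsHomogeneous j) (h : f ∈ I ⊔ J)
    (hI : ∀ p ∈ I, homogeneousComponent j p ∈ I') (hJ : ∀ q ∈ J, homogeneousComponent j q ∈ J') :
    f ∈ I' ⊔ J' := by
  obtain ⟨p, hp, q, hq, rfl⟩ := Submodule.mem_sup.mp h
  rw [← homogeneousComponent_eq_self hf, map_add]
  exact Submodule.add_mem_sup (hI p hp) (hJ q hq)

noncomputable def homogeneousPart (I : Ideal (MvPolynomial σ R)) (j : ℕ) :
    Submodule R (MvPolynomial σ R) :=
  Submodule.restrictScalars R (I : Submodule (MvPolynomial σ R) (MvPolynomial σ R))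
    ⊓ homogeneousSubmodule σ R j

lemma homogeneousPart_le_of_forall_isHomogeneous {I J : Ideal (MvPolynomial σ R)} {j : ℕ}
    (h : ∀ f, f.IsHomogeneous j → f ∈ I → f ∈ J) : homogeneousPart I j ≤ homogeneousPart J j :=
  fun f ⟨hfI, hfj⟩ => ⟨h f hfj hfI, hfj⟩

noncomputable def spanMonomialsDegIcc (J : Ideal (MvPolynomial σ R)) (D E : ℕ) :
    Ideal (MvPolynomial σ R) :=
  Ideal.span ((fun a => monomial a (1 : R)) '' {a | a.degree ∈ Set.Icc D E ∧ monomial a 1 ∈ J})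

variable {J : Ideal (MvPolynomial σ R)} {D E : ℕ}

lemma spanMonomialsDegIcc_le : spanMonomialsDegIcc J D E ≤ J :=
  Ideal.span_le.mpr <| Set.image_subset_iff.mpr fun _ ha => ha.2

lemma homogeneousComponent_mem_spanMonomialsDegIcc (hJ : IsMonomialIdeal J)
    {q : MvPolynomial σ R} (hq : q ∈ J) {j : ℕ} (hj : j ∈ Set.Icc D E) :
    homogeneousComponent j q ∈ spanMonomialsDegIcc J D E :=
  homogeneousComponent_mem_of_forall_monomial_mem fun c hc hcj =>
    Ideal.subset_span ⟨c, ⟨hcj ▸ hj, hJ q hq c hc⟩, rfl⟩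

lemma homogeneousComponent_eq_zero_of_mem_spanMonomialsDegIcc {q : MvPolynomial σ R}
    (hq : q ∈ spanMonomialsDegIcc J D E) {j : ℕ} (hj : j < D) : homogeneousComponent j q = 0 :=
  homogeneousComponent_eq_zero_of_mem_span_monomial_image hq fun _ hs => hj.trans_le hs.1.1

lemma sup_span_monomials_notMem_eq [Nontrivial R] {I : Ideal (MvPolynomial σ R)}
    (hI : IsMonomialIdeal I) (hJ : IsMonomialIdeal J) :
    I ⊔ Ideal.span ((fun a => monomial a (1 : R)) ''
        {a | a.degree ∈ Set.Icc D E ∧ monomial a 1 ∈ I ⊔ J ∧ monomial a 1 ∉ I}) =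
      I ⊔ spanMonomialsDegIcc J D E := by
  refine le_antisymm (sup_le le_sup_left ?_) (sup_le le_sup_left ?_) <;>
    refine Ideal.span_le.mpr (Set.image_subset_iff.mpr fun a ha => ?_)
  · obtain ⟨hdeg, hIJ, hnotI⟩ := ha
    exact Ideal.mem_sup_right <| Ideal.subset_span
      ⟨a, ⟨hdeg, (hI.monomial_mem_or_of_mem_sup hJ hIJ).resolve_left hnotI⟩, rfl⟩
  · by_cases haI : monomial a (1 : R) ∈ I
    · exact Ideal.mem_sup_left haI
    · exact Ideal.mem_sup_right <| Ideal.subset_span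
        ⟨a, ⟨ha.1, Ideal.mem_sup_right ha.2, haI⟩, rfl⟩

lemma homogeneousPart_sup_spanMonomialsDegIcc_of_lt {I : Ideal (MvPolynomial σ R)}
    (hI : IsMonomialIdeal I) {j : ℕ} (hj : j < D) :
    homogeneousPart (I ⊔ spanMonomialsDegIcc J D E) j = homogeneousPart I j := by
  refine le_antisymm (homogeneousPart_le_of_forall_isHomogeneous fun f hf hfIJ => ?_)
    (homogeneousPart_le_of_forall_isHomogeneous fun _ _ => Ideal.mem_sup_left)
  simpa using mem_sup_of_isHomogeneous (J' := ⊥) hf hfIJ (fun _ => hI.homogeneousComponent_mem)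
    fun q hq => by rw [homogeneousComponent_eq_zero_of_mem_spanMonomialsDegIcc hq hj]; rfl

lemma homogeneousPart_sup_spanMonomialsDegIcc_of_mem {I : Ideal (MvPolynomial σ R)}
    (hI : IsMonomialIdeal I) (hJ : IsMonomialIdeal J) {j : ℕ} (hj : j ∈ Set.Icc D E) :
    homogeneousPart (I ⊔ spanMonomialsDegIcc J D E) j = homogeneousPart (I ⊔ J) j :=
  le_antisymm
    (homogeneousPart_le_of_forall_isHomogeneous fun _ _ =>
      (sup_le_sup_left spanMonomialsDegIcc_le I ·))
    (homogeneousPart_le_of_forall_isHomogeneous fun _ hf hfIJ => mem_sup_of_isHomogeneous hf hfIJ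
      (fun _ => hI.homogeneousComponent_mem)
      fun _ hq => homogeneousComponent_mem_spanMonomialsDegIcc hJ hq hj)

end MonomialIdeals

section LexIdeals

variable {k : Type} [Field k] {n : ℕ} {L : Ideal (MvPolynomial (Fin n) k)}

lemma IsLexIdeal.monomial_mem_of_toLex_le (hL : IsLexIdeal k L) {a b : Fin n →₀ ℕ}
    (hdeg : mdeg a = mdeg b) (hab : toLex a ≤ toLex b) (ha : monomial a (1 : k) ∈ L) :
    monomial b (1 : k) ∈ L := by
  rcases hab.eq_or_lt with heq | hlt
  · rwa [← toLex_inj.mp heq]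
  · exact hL.2 a b hdeg (monLT_iff_toLex_lt.mpr hlt) ha

lemma IsLexIdeal.monomial_lexTrunc_mem (hL : IsLexIdeal k L) {s a : Fin n →₀ ℕ} {m : ℕ}
    (hsa : s ≤ a) (hs : monomial s (1 : k) ∈ L) (hsm : mdeg s ≤ m) :
    monomial (lexTrunc a m) (1 : k) ∈ L :=
  monomial_mem_of_le
    (IsLexIdeal.monomial_mem_of_toLex_le hL (mdeg_lexTrunc a (Finsupp.degree_mono hsa)).symm
      (toLex_le_lexTrunc a hsa) hs)
    (lexTrunc_mono a hsm)

lemma IsLexIdeal.spanMonomialsDegIcc (hL : IsLexIdeal k L) (D E : ℕ) :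
    IsLexIdeal k (spanMonomialsDegIcc L D E) := by
  refine ⟨isMonomialIdeal_span_monomial_image _, fun a b hdeg hab ha => ?_⟩
  obtain ⟨s, ⟨⟨hDs, hsE⟩, hs⟩, hsa⟩ := monomial_mem_span_monomial_image_iff.mp ha
  have hsa' : mdeg s ≤ mdeg a := Finsupp.degree_mono hsa
  rw [← mdeg_eq_degree] at hDs hsE
  set m := min (mdeg a) E
  have hma : m ≤ mdeg a := min_le_left _ _
  have hta : monomial (lexTrunc a m) (1 : k) ∈ L :=
    IsLexIdeal.monomial_lexTrunc_mem hL hsa hs (le_min hsa' hsE)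
  have htb : monomial (lexTrunc b m) (1 : k) ∈ L :=
    IsLexIdeal.monomial_mem_of_toLex_le hL
      (by rw [mdeg_lexTrunc a hma, mdeg_lexTrunc b (hdeg ▸ hma)])
      (lexTrunc_toLex_mono hab hma (hdeg ▸ hma)) hta
  refine monomial_mem_span_monomial_image_iff.mpr ⟨lexTrunc b m, ⟨⟨?_, ?_⟩, htb⟩, lexTrunc_le b m⟩
  all_goals
    rw [← mdeg_eq_degree, mdeg_lexTrunc b (hdeg ▸ hma)]
    omega

end LexIdeals

lemma isMonomialIdeal_powIdeal (k : Type) [Field k] {n h : ℕ} (hh : h ≤ n) (d : Fin h → ℕ) :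
    IsMonomialIdeal (powIdeal k hh d) := by
  have : powIdeal k hh d = Ideal.span ((fun a => monomial a (1 : k)) ''
      Set.range fun i => Finsupp.single (Fin.castLE hh i) (d i)) := by
    rw [powIdeal, ← Set.range_comp]
    simp only [Function.comp_def, X_pow_eq_monomial]
  exact this ▸ isMonomialIdeal_span_monomial_image _

theorem stmt13_general (k : Type) [Field k] {n h : ℕ} (hh : h ≤ n)
    (d : Fin h → ℕ)
    (𝕃 : Ideal (MvPolynomial (Fin n) k)) (hL : IsLPP k hh d 𝕃) (D : ℕ)
    (V : Set (MvPolynomial (Fin n) k))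
    (hV : V = {m | ∃ a : Fin n →₀ ℕ, m = monomial a (1 : k) ∧
      (mdeg a = D ∨ mdeg a = D + 1) ∧ m ∈ 𝕃 ∧ m ∉ powIdeal k hh d})
    (𝕃₅ : Ideal (MvPolynomial (Fin n) k)) (h𝕃₅ : 𝕃₅ = powIdeal k hh d ⊔ Ideal.span V) :
    IsLPP k hh d 𝕃₅ ∧
    (∀ j : ℕ, j < D →
      Submodule.restrictScalars k (𝕃₅ : Submodule (MvPolynomial (Fin n) k) (MvPolynomial (Fin n) k))
          ⊓ homogeneousSubmodule (Fin n) k j =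
        Submodule.restrictScalars k
            ((powIdeal k hh d : Ideal (MvPolynomial (Fin n) k)) :
              Submodule (MvPolynomial (Fin n) k) (MvPolynomial (Fin n) k))
          ⊓ homogeneousSubmodule (Fin n) k j) ∧
    (∀ j : ℕ, j = D ∨ j = D + 1 →
      Submodule.restrictScalars k (𝕃₅ : Submodule (MvPolynomial (Fin n) k) (MvPolynomial (Fin n) k))
          ⊓ homogeneousSubmodule (Fin n) k j =
        Submodule.restrictScalars k (𝕃 : Submodule (MvPolynomial (Fin n) k) (MvPolynomial (Fin n) k))
          ⊓ homogeneousSubmodule (Fin n) k j) := by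
  obtain ⟨L, hlex, rfl⟩ := hL
  have hP := isMonomialIdeal_powIdeal k hh d
  have hV' : V = (fun a => monomial a (1 : k)) '' {a | a.degree ∈ Set.Icc D (D + 1) ∧
      monomial a 1 ∈ powIdeal k hh d ⊔ L ∧ monomial a 1 ∉ powIdeal k hh d} := by
    subst hV
    ext m
    simp only [Set.mem_ofPred_eq, Set.mem_image, Set.mem_Icc, ← mdeg_eq_degree]
    constructor
    · rintro ⟨a, rfl, hdeg, hmem⟩
      exact ⟨a, ⟨by omega, hmem⟩, rfl⟩
    · rintro ⟨a, ⟨hdeg, hmem⟩, rfl⟩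
      exact ⟨a, rfl, by omega, hmem⟩
  rw [hV', sup_span_monomials_notMem_eq hP hlex.1] at h𝕃₅
  subst h𝕃₅
  refine ⟨⟨_, IsLexIdeal.spanMonomialsDegIcc hlex D (D + 1), rfl⟩, fun j hj => ?_, fun j hj => ?_⟩
  · exact homogeneousPart_sup_spanMonomialsDegIcc_of_lt hP hj
  · exact homogeneousPart_sup_spanMonomialsDegIcc_of_mem hP hlex.1 (Set.mem_Icc.mpr (by omega))

/-- truncating the "lex part" `V` of a `d`-LPP ideal `𝕃 = P ⊕ V` to the two
degrees `D, D+1` and generating an ideal again yields a `d`-LPP ideal, which agrees with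
`P` in degrees `< D` and with `𝕃` in degrees `D` and `D + 1`. -/
theorem stmt13 (k : Type) [Field k] {n h : ℕ} (hh : h ≤ n)
    (d : Fin h → ℕ) (hmono : Monotone d) (hpos : ∀ i, 1 ≤ d i)
    (𝕃 : Ideal (MvPolynomial (Fin n) k)) (hL : IsLPP k hh d 𝕃) (D : ℕ)
    (V : Set (MvPolynomial (Fin n) k))
    (hV : V = {m | ∃ a : Fin n →₀ ℕ, m = monomial a (1 : k) ∧
      (mdeg a = D ∨ mdeg a = D + 1) ∧ m ∈ 𝕃 ∧ m ∉ powIdeal k hh d})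
    (𝕃₅ : Ideal (MvPolynomial (Fin n) k)) (h𝕃₅ : 𝕃₅ = powIdeal k hh d ⊔ Ideal.span V) :
    IsLPP k hh d 𝕃₅ ∧
    (∀ j : ℕ, j < D →
      Submodule.restrictScalars k (𝕃₅ : Submodule (MvPolynomial (Fin n) k) (MvPolynomial (Fin n) k))
          ⊓ homogeneousSubmodule (Fin n) k j =
        Submodule.restrictScalars k
            ((powIdeal k hh d : Ideal (MvPolynomial (Fin n) k)) :
              Submodule (MvPolynomial (Fin n) k) (MvPolynomial (Fin n) k))
          ⊓ homogeneousSubmodule (Fin n) k j) ∧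
    (∀ j : ℕ, j = D ∨ j = D + 1 →
      Submodule.restrictScalars k (𝕃₅ : Submodule (MvPolynomial (Fin n) k) (MvPolynomial (Fin n) k))
          ⊓ homogeneousSubmodule (Fin n) k j =
        Submodule.restrictScalars k (𝕃 : Submodule (MvPolynomial (Fin n) k) (MvPolynomial (Fin n) k))
          ⊓ homogeneousSubmodule (Fin n) k j) :=
  stmt13_general k hh d 𝕃 hL D V hV 𝕃₅ h𝕃₅
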